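/- Let X and Y be real vector spaces equipped with quasi-norms ‖·‖_X and ‖·‖_Y with quasi-triangle constants κ_X and κ_Y, let n ≥ 1, and let 0 < c₁ ≤ c₂. Let f, z ∈ X^n and g, w ∈ Y^n be tuples such that ∑_{i=1}^n f_i ⊗ g_i = ∑_{i=1}^n z_i ⊗ w_i in the algebraic tensor product X ⊗_ℝ Y. Let A, A′ be reducing matrices (with constants c₁, c₂) for f and z with respect to ‖·‖_X, and let B, B′ be reducing matrices (with constants c₁, c₂) for g and w with respect to ‖·‖_Y. Then there is a constant C depending only on n, c₁, c₂, κ_X, κ_Y such that ‖A·B‖_op ≤ C·‖A′·B′‖_op; in particular, up to constants depending only on these parameters, ‖A·B‖_op depends only on the tensor ∑_{i=1}^n f_i ⊗ g_i and not on the chosen representation. -/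

import Mathlib

open scoped TensorProduct

universe u v

/-- The Euclidean norm on `Fin k → ℝ`. -/
noncomputable def euclNorm {k : ℕ} (x : Fin k → ℝ) : ℝ := Real.sqrt (∑ i, x i ^ 2)

/-- The operator norm of an `n × n` real matrix with respect to the Euclidean norm. -/
noncomputable def opNorm {n : ℕ} (M : Matrix (Fin n) (Fin n) ℝ) : ℝ :=
  ‖Matrix.toEuclideanCLM (𝕜 := ℝ) M‖

/-- A quasi-norm on a real vector space `Z` with quasi-triangle constant `κ`. -/
def IsQuasiNorm {Z : Type*} [AddCommGroup Z] [Module ℝ Z] (N : Z → ℝ) (κ : ℝ) : Prop :=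
  (∀ z, 0 ≤ N z) ∧ (∀ (l : ℝ) (z : Z), N (l • z) = |l| * N z) ∧
    ∀ z w, N (z + w) ≤ κ * (N z + N w)

/-- `A` is a reducing matrix for the tuple `f` with respect to `N` (with constants
`c₁ ≤ c₂`): `A` is positive semidefinite and `c₁|Ae| ≤ N(∑ eᵢ • fᵢ) ≤ c₂|Ae|`. -/
def IsReducing {X : Type*} [AddCommGroup X] [Module ℝ X] (N : X → ℝ)
    {n : ℕ} (f : Fin n → X) (c₁ c₂ : ℝ) (A : Matrix (Fin n) (Fin n) ℝ) : Prop :=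
  A.PosSemidef ∧ ∀ e : Fin n → ℝ,
    c₁ * euclNorm (A.mulVec e) ≤ N (∑ i, e i • f i) ∧
      N (∑ i, e i • f i) ≤ c₂ * euclNorm (A.mulVec e)

lemma euclNorm_eq_norm {k : ℕ} (x : Fin k → ℝ) :
    euclNorm x = ‖(WithLp.equiv 2 (Fin k → ℝ)).symm x‖ := by
  rw [EuclideanSpace.norm_eq]
  simp [euclNorm, sq_abs]

lemma euclNorm_nonneg {k : ℕ} (x : Fin k → ℝ) : 0 ≤ euclNorm x :=
  Real.sqrt_nonneg _

lemma dotProduct_le_euclNorm {k : ℕ} (x y : Fin k → ℝ) :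
    |dotProduct x y| ≤ euclNorm x * euclNorm y := by
  have h := abs_real_inner_le_norm ((WithLp.equiv 2 (Fin k → ℝ)).symm x)
    ((WithLp.equiv 2 (Fin k → ℝ)).symm y)
  rw [euclNorm_eq_norm, euclNorm_eq_norm]
  refine le_trans (le_of_eq ?_) h
  simp [PiLp.inner_apply, RCLike.inner_apply, dotProduct, mul_comm]

lemma euclNorm_eq_zero {k : ℕ} {x : Fin k → ℝ} (h : euclNorm x = 0) : x = 0 := by
  rw [euclNorm_eq_norm] at h
  have := norm_eq_zero.mp h
  simpa using congrArg (WithLp.equiv 2 (Fin k → ℝ)) this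

namespace IsQuasiNorm

variable {Z : Type*} [AddCommGroup Z] [Module ℝ Z] {N : Z → ℝ} {κ : ℝ}

lemma zero (h : IsQuasiNorm N κ) : N 0 = 0 := by
  have := h.2.1 0 0
  simpa using this

lemma neg (h : IsQuasiNorm N κ) (z : Z) : N (-z) = N z := by
  have := h.2.1 (-1) z
  simpa using this

end IsQuasiNorm

/-- A linear functional vanishing on `V` and equal to `1` at `u ∉ V`. -/
lemma exists_functional_sep {U : Type*} [AddCommGroup U] [Module ℝ U]
    (V : Submodule ℝ U) (u : U) (hu : u ∉ V) :
    ∃ χ : U →ₗ[ℝ] ℝ, (∀ x ∈ V, χ x = 0) ∧ χ u = 1 := by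
  set Q := U ⧸ V
  have hq : V.mkQ u ≠ 0 := by
    simpa [Submodule.Quotient.mk_eq_zero] using hu
  let e := LinearEquiv.toSpanNonzeroSingleton ℝ Q (V.mkQ u) hq
  obtain ⟨g, hg⟩ := LinearMap.exists_extend (e.symm : (ℝ ∙ (V.mkQ u)) →ₗ[ℝ] ℝ)
  refine ⟨g ∘ₗ V.mkQ, fun x hx => ?_, ?_⟩
  · have : V.mkQ x = 0 := (Submodule.Quotient.mk_eq_zero V).mpr hx
    simp [LinearMap.comp_apply, this]
  · have h1 : (⟨V.mkQ u, Submodule.mem_span_singleton_self _⟩ : (ℝ ∙ (V.mkQ u))) = e 1 := by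
      ext; exact (one_smul ℝ (V.mkQ u)).symm
    have := congrArg (fun (φ : (ℝ ∙ (V.mkQ u)) →ₗ[ℝ] ℝ) => φ ⟨V.mkQ u, Submodule.mem_span_singleton_self _⟩) hg
    simp only [LinearMap.comp_apply, Submodule.subtype_apply] at this
    rw [h1] at this
    show g (V.mkQ u) = 1
    rw [this]
    exact e.symm_apply_apply 1

lemma step_extend {U : Type*} [AddCommGroup U] [Module ℝ U] {ν : U → ℝ} {κ : ℝ}
    (hν : IsQuasiNorm ν κ) (hκ : 1 ≤ κ) {M : ℝ} (hM : 0 ≤ M)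
    (V : Submodule ℝ U) (φ : U →ₗ[ℝ] ℝ) (hφ : ∀ x ∈ V, |φ x| ≤ M * ν x) (u : U) :
    ∃ φ' : U →ₗ[ℝ] ℝ, (∀ x ∈ V, φ' x = φ x) ∧
      ∀ x ∈ V ⊔ (ℝ ∙ u), |φ' x| ≤ κ * M * ν x := by
  have hν0 : ∀ x, 0 ≤ ν x := hν.1
  by_cases hu : u ∈ V
  · refine ⟨φ, fun x _ => rfl, fun x hx => ?_⟩
    have hx' : x ∈ V := by
      rwa [sup_eq_left.mpr ((Submodule.span_singleton_le_iff_mem u V).mpr hu)] at hx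
    have h1 := hφ x hx'
    nlinarith [hν0 x, hφ x hx', mul_nonneg (mul_nonneg (sub_nonneg.mpr hκ) hM) (hν0 x)]
  · have hkey : ∀ x ∈ V, ∀ y ∈ V,
        -φ y - κ * M * ν (y + u) ≤ -φ x + κ * M * ν (x + u) := by
      intro x hx y hy
      have h1 : |φ (x - y)| ≤ M * ν (x - y) := hφ _ (V.sub_mem hx hy)
      have h2 : ν (x - y) ≤ κ * (ν (x + u) + ν (y + u)) := by
        have : x - y = (x + u) + -(y + u) := by abel
        rw [this]
        calc ν ((x + u) + -(y + u)) ≤ κ * (ν (x + u) + ν (-(y + u))) := hν.2.2 _ _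
          _ = κ * (ν (x + u) + ν (y + u)) := by rw [hν.neg]
      have h3 : φ x - φ y ≤ |φ (x - y)| := by
        rw [← map_sub]  at *
        exact le_abs_self _
      have h4 : M * ν (x - y) ≤ M * (κ * (ν (x + u) + ν (y + u))) :=
        mul_le_mul_of_nonneg_left h2 hM
      have h5 : φ x - φ y ≤ M * (κ * (ν (x + u) + ν (y + u))) := by
        calc φ x - φ y = φ (x - y) := (map_sub φ x y).symm
          _ ≤ |φ (x - y)| := le_abs_self _
          _ ≤ M * ν (x - y) := h1
          _ ≤ _ := h4
      nlinarith [h5]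
    set S : Set ℝ := {r : ℝ | ∃ x ∈ V, r = -φ x - κ * M * ν (x + u)} with hS
    have hSne : S.Nonempty := ⟨-φ 0 - κ * M * ν (0 + u), 0, V.zero_mem, rfl⟩
    have hSbd : BddAbove S := by
      refine ⟨-φ 0 + κ * M * ν (0 + u), fun r hr => ?_⟩
      obtain ⟨y, hy, rfl⟩ := hr
      exact hkey 0 V.zero_mem y hy
    set t : ℝ := sSup S with ht
    have hclaim : ∀ x ∈ V, |φ x + t| ≤ κ * M * ν (x + u) := by
      intro x hx
      have hlow : -φ x - κ * M * ν (x + u) ≤ t := le_csSup hSbd ⟨x, hx, rfl⟩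
      have hhigh : t ≤ -φ x + κ * M * ν (x + u) := by
        refine csSup_le hSne fun r hr => ?_
        obtain ⟨y, hy, rfl⟩ := hr
        exact hkey x hx y hy
      rw [abs_le]
      constructor <;> linarith
    obtain ⟨χ, hχV, hχu⟩ := exists_functional_sep V u hu
    refine ⟨φ + (t - φ u) • χ, fun x hx => by simp [hχV x hx], ?_⟩
    intro x hx
    obtain ⟨y, hy, w, hw, rfl⟩ := Submodule.mem_sup.mp hx
    obtain ⟨r, rfl⟩ := Submodule.mem_span_singleton.mp hw
    have heval : (φ + (t - φ u) • χ) (y + r • u) = φ y + r * t := by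
      simp only [LinearMap.add_apply, LinearMap.smul_apply, map_add, map_smul,
        smul_eq_mul, hχV y hy, hχu]
      ring
    rw [heval]
    rcases eq_or_ne r 0 with rfl | hr
    · simp only [zero_mul, add_zero, zero_smul]
      have := hφ y hy
      nlinarith [hν0 y, mul_nonneg (mul_nonneg (sub_nonneg.mpr hκ) hM) (hν0 y)]
    · have hrep : y + r • u = r • ((r⁻¹ • y) + u) := by
        rw [smul_add, smul_smul, mul_inv_cancel₀ hr, one_smul]
      have hνeq : ν (y + r • u) = |r| * ν ((r⁻¹ • y) + u) := by
        rw [hrep, hν.2.1]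
      have hφeq : φ y + r * t = r * (φ (r⁻¹ • y) + t) := by
        rw [map_smul, smul_eq_mul, mul_add]
        field_simp
      rw [hφeq, hνeq, abs_mul]
      have := hclaim (r⁻¹ • y) (V.smul_mem _ hy)
      calc |r| * |φ (r⁻¹ • y) + t| ≤ |r| * (κ * M * ν ((r⁻¹ • y) + u)) :=
            mul_le_mul_of_nonneg_left this (abs_nonneg r)
        _ = κ * M * (|r| * ν ((r⁻¹ • y) + u)) := by ring

lemma list_extend {U : Type*} [AddCommGroup U] [Module ℝ U] {ν : U → ℝ} {κ : ℝ}
    (hν : IsQuasiNorm ν κ) (hκ : 1 ≤ κ) :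
    ∀ (l : List U) (M : ℝ), 0 ≤ M → ∀ (V : Submodule ℝ U) (φ : U →ₗ[ℝ] ℝ),
      (∀ x ∈ V, |φ x| ≤ M * ν x) →
      ∃ φ' : U →ₗ[ℝ] ℝ, (∀ x ∈ V, φ' x = φ x) ∧
        ∀ x ∈ V ⊔ Submodule.span ℝ {a | a ∈ l}, |φ' x| ≤ κ ^ l.length * M * ν x := by
  intro l
  induction l with
  | nil =>
    intro M hM V φ hφ
    refine ⟨φ, fun _ _ => rfl, fun x hx => ?_⟩
    have : {a : U | a ∈ ([] : List U)} = (∅ : Set U) := by ext a; simp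
    rw [this, Submodule.span_empty, sup_bot_eq] at hx
    simpa using hφ x hx
  | cons u l ih =>
    intro M hM V φ hφ
    obtain ⟨φ₁, hφ₁V, hφ₁⟩ := step_extend hν hκ hM V φ hφ u
    obtain ⟨φ', hφ'V, hφ'⟩ := ih (κ * M) (mul_nonneg (le_trans zero_le_one hκ) hM)
      (V ⊔ (ℝ ∙ u)) φ₁ hφ₁
    refine ⟨φ', fun x hx => (hφ'V x (Submodule.mem_sup_left hx)).trans (hφ₁V x hx),
      fun x hx => ?_⟩
    have hsp : V ⊔ Submodule.span ℝ {a | a ∈ u :: l} =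
        (V ⊔ (ℝ ∙ u)) ⊔ Submodule.span ℝ {a | a ∈ l} := by
      rw [show {a : U | a ∈ u :: l} = insert u {a : U | a ∈ l} from by ext a; simp,
        Submodule.span_insert, sup_assoc]
    rw [hsp] at hx
    have h := hφ' x hx
    calc |φ' x| ≤ κ ^ l.length * (κ * M) * ν x := h
      _ = κ ^ (u :: l).length * M * ν x := by rw [List.length_cons]; ring

lemma exists_functional_values {X : Type*} [AddCommGroup X] [Module ℝ X]
    {n : ℕ} (v : Fin n → X) (r : Fin n → ℝ)
    (h : ∀ c : Fin n → ℝ, (∑ i, c i • v i) = 0 → (∑ i, c i * r i) = 0) :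
    ∃ φ : X →ₗ[ℝ] ℝ, ∀ i, φ (v i) = r i := by
  let T : (Fin n → ℝ) →ₗ[ℝ] X := Fintype.linearCombination ℝ v
  let ξ : (Fin n → ℝ) →ₗ[ℝ] ℝ := Fintype.linearCombination ℝ r
  have hker : LinearMap.ker T ≤ LinearMap.ker ξ := by
    intro c hc
    rw [LinearMap.mem_ker] at hc ⊢
    rw [Fintype.linearCombination_apply] at hc ⊢
    simp only [smul_eq_mul]
    exact h c hc
  let ξq : ((Fin n → ℝ) ⧸ LinearMap.ker T) →ₗ[ℝ] ℝ := (LinearMap.ker T).liftQ ξ hker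
  let θ₀ : (LinearMap.range T) →ₗ[ℝ] ℝ := ξq ∘ₗ (T.quotKerEquivRange.symm : _ →ₗ[ℝ] _)
  obtain ⟨φ, hφ⟩ := LinearMap.exists_extend θ₀
  refine ⟨φ, fun i => ?_⟩
  have hv : T (Pi.single i 1) = v i := by
    rw [Fintype.linearCombination_apply_single, one_smul]
  have hmem : v i ∈ LinearMap.range T := ⟨Pi.single i 1, hv⟩
  have h1 : φ (v i) = θ₀ ⟨v i, hmem⟩ := by
    have := congrArg (fun (ψ : (LinearMap.range T) →ₗ[ℝ] ℝ) => ψ ⟨v i, hmem⟩) hφ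
    simpa using this
  rw [h1]
  have h2 : (⟨v i, hmem⟩ : LinearMap.range T) = ⟨T (Pi.single i 1), LinearMap.mem_range_self T (Pi.single i 1)⟩ := by
    ext; exact hv.symm
  rw [h2]
  show ξq (T.quotKerEquivRange.symm ⟨T (Pi.single i 1), _⟩) = r i
  rw [LinearMap.quotKerEquivRange_symm_apply_image]
  show ξq (Submodule.Quotient.mk (Pi.single i 1)) = r i
  rw [Submodule.liftQ_apply]
  rw [Fintype.linearCombination_apply]
  simp [Pi.single_apply]

open scoped RealInnerProductSpace in
lemma inner_eq_dot {n : ℕ} (x y : EuclideanSpace ℝ (Fin n)) :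
    ⟪x, y⟫ = dotProduct (WithLp.equiv 2 (Fin n → ℝ) x) (WithLp.equiv 2 (Fin n → ℝ) y) := by
  simp [PiLp.inner_apply, RCLike.inner_apply, dotProduct, mul_comm]

open scoped RealInnerProductSpace in
lemma factor_through {n : ℕ} {A : Matrix (Fin n) (Fin n) ℝ} (hA : A.IsHermitian)
    {p : Fin n → ℝ} {L : ℝ} (hL : 0 ≤ L)
    (h : ∀ c : Fin n → ℝ, |dotProduct c p| ≤ L * euclNorm (A.mulVec c)) :
    ∃ u₀ : Fin n → ℝ, euclNorm u₀ ≤ L ∧ A.mulVec u₀ = p := by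
  classical
  set E := EuclideanSpace ℝ (Fin n)
  set eqv := WithLp.equiv 2 (Fin n → ℝ) with heqv
  set T : E →ₗ[ℝ] E := Matrix.toEuclideanLin A with hT
  have hTapp : ∀ x : E, T x = eqv.symm (A.mulVec (eqv x)) := fun x => rfl
  have hsym : T.IsSymmetric := Matrix.isHermitian_iff_isSymmetric.mp hA
  set K := LinearMap.ker T with hK
  have hzero : euclNorm (0 : Fin n → ℝ) = 0 := by simp [euclNorm]
  have hp' : eqv.symm p ∈ Kᗮ := by
    rw [Submodule.mem_orthogonal]
    intro k hk
    have hk0 : A.mulVec (eqv k) = 0 := by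
      have : T k = 0 := hk
      have := congrArg eqv (hTapp k ▸ this)
      simp at this; exact this
    have := h (eqv k)
    rw [hk0, hzero, mul_zero] at this
    have habs : |dotProduct (eqv k) p| = 0 := le_antisymm this (abs_nonneg _)
    rw [inner_eq_dot]
    exact abs_eq_zero.mp habs
  have hsub : LinearMap.range T ≤ Kᗮ := by
    rintro _ ⟨x, rfl⟩
    rw [Submodule.mem_orthogonal]
    intro u hu
    have : T u = 0 := hu
    rw [← hsym u x, this, inner_zero_left]
  have hrange : Kᗮ = LinearMap.range T := by
    symm
    apply Submodule.eq_of_le_of_finrank_le hsub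
    have h1 := Submodule.finrank_add_finrank_orthogonal (K := K)
    have h2 := LinearMap.finrank_range_add_finrank_ker T
    rw [← hK] at h2
    omega
  obtain ⟨s, hs⟩ : eqv.symm p ∈ LinearMap.range T := hrange ▸ hp'
  set u' := s - (K.orthogonalProjectionOnto s : E) with hu'
  have hu'mem : u' ∈ Kᗮ := K.sub_starProjection_mem_orthogonal s
  have hproj : T ((K.orthogonalProjectionOnto s : E)) = 0 := (K.orthogonalProjectionOnto s).2
  have hTu' : T u' = eqv.symm p := by
    rw [hu', map_sub, hs, hproj, sub_zero]
  obtain ⟨s', hs'⟩ : u' ∈ LinearMap.range T := hrange ▸ hu'mem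
  have hnorm : ‖u'‖ ≤ L := by
    have h1 : ⟪T s', u'⟫ = ⟪s', T u'⟫ := hsym s' u'
    rw [hs', hTu'] at h1
    have h2 : ⟪s', eqv.symm p⟫ ≤ L * ‖u'‖ := by
      rw [inner_eq_dot]
      have h3 := h (eqv s')
      have h4 : A.mulVec (eqv s') = eqv u' := by
        have := congrArg eqv ((hTapp s') ▸ hs')
        simpa using this
      have h5 : euclNorm (eqv u') = ‖u'‖ := by
        rw [euclNorm_eq_norm, eqv.symm_apply_apply]
      rw [h4, h5] at h3
      calc dotProduct (eqv s') (eqv (eqv.symm p))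
          = dotProduct (eqv s') p := by rw [eqv.apply_symm_apply]
        _ ≤ |dotProduct (eqv s') p| := le_abs_self _
        _ ≤ L * ‖u'‖ := h3
    have h6 : ‖u'‖ ^ 2 ≤ L * ‖u'‖ := by
      rw [← real_inner_self_eq_norm_sq, h1]; exact h2
    nlinarith [norm_nonneg u', sq_nonneg (‖u'‖ - L)]
  refine ⟨eqv u', ?_, ?_⟩
  · rw [euclNorm_eq_norm]
    rw [show eqv.symm (eqv u') = u' from eqv.symm_apply_apply u']
    exact hnorm
  · have := congrArg eqv hTu'
    rw [hTapp u'] at this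
    simpa using this

lemma euclNorm_smul {k : ℕ} (r : ℝ) (x : Fin k → ℝ) : euclNorm (r • x) = |r| * euclNorm x := by
  simp only [euclNorm, Pi.smul_apply, smul_eq_mul, mul_pow]
  rw [← Finset.mul_sum, Real.sqrt_mul (sq_nonneg r), Real.sqrt_sq_eq_abs]

lemma euclNorm_sq {k : ℕ} (x : Fin k → ℝ) : euclNorm x ^ 2 = ∑ i, x i ^ 2 :=
  Real.sq_sqrt (Finset.sum_nonneg fun i _ => sq_nonneg _)

lemma dot_self_eq {k : ℕ} (x : Fin k → ℝ) : dotProduct x x = euclNorm x ^ 2 := by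
  rw [euclNorm_sq, dotProduct]
  congr 1; ext i; ring

lemma toCLM_apply {n : ℕ} (M : Matrix (Fin n) (Fin n) ℝ) (x : Fin n → ℝ) :
    Matrix.toEuclideanCLM (𝕜 := ℝ) M ((WithLp.equiv 2 (Fin n → ℝ)).symm x) =
      (WithLp.equiv 2 (Fin n → ℝ)).symm (M.mulVec x) := by
  exact Matrix.toEuclideanCLM_toLp M x

lemma euclNorm_mulVec_le {n : ℕ} (M : Matrix (Fin n) (Fin n) ℝ) (x : Fin n → ℝ) :
    euclNorm (M.mulVec x) ≤ opNorm M * euclNorm x := by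
  have h := (Matrix.toEuclideanCLM (𝕜 := ℝ) M).le_opNorm ((WithLp.equiv 2 (Fin n → ℝ)).symm x)
  rw [toCLM_apply] at h
  rw [euclNorm_eq_norm, euclNorm_eq_norm]
  exact h

lemma opNorm_le_of_dot {n : ℕ} (M : Matrix (Fin n) (Fin n) ℝ) (S : ℝ) (hS : 0 ≤ S)
    (h : ∀ d e : Fin n → ℝ, euclNorm d ≤ 1 → euclNorm e ≤ 1 →
      dotProduct d (M.mulVec e) ≤ S) :
    opNorm M ≤ S := by
  have key : ∀ e : Fin n → ℝ, euclNorm e ≤ 1 → euclNorm (M.mulVec e) ≤ S := by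
    intro e he
    set y := M.mulVec e with hy
    rcases eq_or_lt_of_le (euclNorm_nonneg y) with h0 | h0
    · linarith
    · have hd : euclNorm ((euclNorm y)⁻¹ • y) ≤ 1 := by
        rw [euclNorm_smul, abs_of_pos (inv_pos.mpr h0), inv_mul_cancel₀ (ne_of_gt h0)]
      have := h _ e hd he
      rw [smul_dotProduct, ← hy, dot_self_eq, smul_eq_mul] at this
      have h2 : (euclNorm y)⁻¹ * euclNorm y ^ 2 = euclNorm y := by
        field_simp
      rw [h2] at this
      exact this
  refine ContinuousLinearMap.opNorm_le_bound _ hS ?_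
  intro x
  set e := WithLp.equiv 2 (Fin n → ℝ) x with he
  have hx : x = (WithLp.equiv 2 (Fin n → ℝ)).symm e := rfl
  rcases eq_or_lt_of_le (norm_nonneg x) with h0 | h0
  · have hx0 : x = 0 := norm_eq_zero.mp h0.symm
    simp [hx0]
  · have h1 : euclNorm ((‖x‖)⁻¹ • e) ≤ 1 := by
      rw [euclNorm_smul, abs_of_pos (inv_pos.mpr h0)]
      have : euclNorm e = ‖x‖ := by rw [euclNorm_eq_norm, ← hx]
      rw [this, inv_mul_cancel₀ (ne_of_gt h0)]
    have h2 := key _ h1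
    rw [Matrix.mulVec_smul, euclNorm_smul, abs_of_pos (inv_pos.mpr h0)] at h2
    have h3 : euclNorm (M.mulVec e) ≤ S * ‖x‖ := by
      have h4 := mul_le_mul_of_nonneg_left h2 (le_of_lt h0)
      rw [← mul_assoc, mul_inv_cancel₀ (ne_of_gt h0), one_mul] at h4
      linarith
    calc ‖(Matrix.toEuclideanCLM (𝕜 := ℝ) M) x‖
        = euclNorm (M.mulVec e) := by
          rw [hx, toCLM_apply, ← euclNorm_eq_norm]
      _ ≤ S * ‖x‖ := h3

lemma symm_dot {n : ℕ} {A : Matrix (Fin n) (Fin n) ℝ} (hA : A.transpose = A) (c d : Fin n → ℝ) :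
    dotProduct c (A.mulVec d) = dotProduct (A.mulVec c) d := by
  rw [Matrix.dotProduct_mulVec, ← Matrix.mulVec_transpose, hA]

lemma transpose_of_posSemidef {n : ℕ} {A : Matrix (Fin n) (Fin n) ℝ}
    (hA : A.PosSemidef) : A.transpose = A := by
  have := hA.1
  rwa [Matrix.IsHermitian, Matrix.conjTranspose_eq_transpose_of_trivial] at this

open scoped TensorProduct in
lemma tensor_pairing {X Y : Type*} [AddCommGroup X] [Module ℝ X] [AddCommGroup Y] [Module ℝ Y]
    {n : ℕ} {f z : Fin n → X} {g w : Fin n → Y}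
    (ht : (∑ i, f i ⊗ₜ[ℝ] g i) = ∑ i, z i ⊗ₜ[ℝ] w i)
    (φ : X →ₗ[ℝ] ℝ) (ψ : Y →ₗ[ℝ] ℝ) :
    ∑ i, φ (f i) * ψ (g i) = ∑ i, φ (z i) * ψ (w i) := by
  let Φ : (X ⊗[ℝ] Y) →ₗ[ℝ] ℝ := (LinearMap.mul' ℝ ℝ) ∘ₗ TensorProduct.map φ ψ
  have h := congrArg Φ ht
  simpa [Φ, map_sum, TensorProduct.map_tmul, LinearMap.mul'_apply] using h

lemma side_lemma {X : Type*} [AddCommGroup X] [Module ℝ X] {Nx : X → ℝ} {κ : ℝ}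
    (hκ : 1 ≤ κ) (hNx : IsQuasiNorm Nx κ) {n : ℕ} {f z : Fin n → X} {c₁ c₂ : ℝ}
    (hc₁ : 0 < c₁) {A A' : Matrix (Fin n) (Fin n) ℝ}
    (hA : IsReducing Nx f c₁ c₂ A) (hA' : IsReducing Nx z c₁ c₂ A')
    (d : Fin n → ℝ) (hd : euclNorm d ≤ 1) :
    ∃ φ : X →ₗ[ℝ] ℝ, (∀ i, φ (f i) = A.mulVec d i) ∧
      ∀ c : Fin n → ℝ, |∑ i, c i * φ (z i)| ≤ (κ ^ n * c₂ / c₁) * euclNorm (A'.mulVec c) := by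
  have hAt : A.transpose = A := transpose_of_posSemidef hA.1
  have hAzero : ∀ c : Fin n → ℝ, (∑ i, c i • f i) = 0 → A.mulVec c = 0 := by
    intro c hc
    have h1 := (hA.2 c).1
    rw [hc, hNx.zero] at h1
    have h2 : euclNorm (A.mulVec c) = 0 := by
      have := euclNorm_nonneg (A.mulVec c)
      nlinarith
    exact euclNorm_eq_zero h2
  obtain ⟨φ₀, hφ₀⟩ := exists_functional_values f (A.mulVec d) (by
    intro c hc
    have h1 : dotProduct c (A.mulVec d) = 0 := by
      rw [symm_dot hAt, hAzero c hc, zero_dotProduct]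
    simpa [dotProduct] using h1)
  have hbound : ∀ x ∈ Submodule.span ℝ (Set.range f), |φ₀ x| ≤ (1 / c₁) * Nx x := by
    intro x hx
    obtain ⟨c, rfl⟩ := (Submodule.mem_span_range_iff_exists_fun ℝ).mp hx
    have h1 : φ₀ (∑ i, c i • f i) = dotProduct c (A.mulVec d) := by
      rw [map_sum]
      simp only [map_smul, smul_eq_mul, hφ₀]
      rfl
    rw [h1, symm_dot hAt]
    have h2 := dotProduct_le_euclNorm (A.mulVec c) d
    have h3 : euclNorm (A.mulVec c) * euclNorm d ≤ euclNorm (A.mulVec c) :=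
      mul_le_mul_of_nonneg_left hd (euclNorm_nonneg _) |>.trans_eq (mul_one _)
    have h4 := (hA.2 c).1
    rw [div_mul_eq_mul_div, le_div_iff₀ hc₁, one_mul]
    calc |dotProduct (A.mulVec c) d| * c₁
        ≤ euclNorm (A.mulVec c) * c₁ := by nlinarith
      _ = c₁ * euclNorm (A.mulVec c) := mul_comm _ _
      _ ≤ Nx (∑ i, c i • f i) := h4
  obtain ⟨φ, hφV, hφbd⟩ := list_extend hNx hκ (List.ofFn z) (1 / c₁)
    (by positivity) (Submodule.span ℝ (Set.range f)) φ₀ hbound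
  refine ⟨φ, fun i => ?_, fun c => ?_⟩
  · rw [hφV (f i) (Submodule.subset_span (Set.mem_range_self i))]
    exact hφ₀ i
  · have hx : (∑ i, c i • z i) ∈ Submodule.span ℝ (Set.range f) ⊔
        Submodule.span ℝ {a | a ∈ List.ofFn z} := by
      apply Submodule.mem_sup_right
      have hset : {a : X | a ∈ List.ofFn z} = Set.range z := by
        ext a; simp [List.mem_ofFn]
      rw [hset]
      exact (Submodule.mem_span_range_iff_exists_fun ℝ).mpr ⟨c, rfl⟩
    have h1 := hφbd _ hx
    rw [List.length_ofFn] at h1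
    have h2 : φ (∑ i, c i • z i) = ∑ i, c i * φ (z i) := by
      rw [map_sum]; simp [map_smul]
    rw [h2] at h1
    have h3 := (hA'.2 c).2
    have hpow : 0 ≤ κ ^ n := pow_nonneg (by linarith) n
    calc |∑ i, c i * φ (z i)| ≤ κ ^ n * (1 / c₁) * Nx (∑ i, c i • z i) := h1
      _ ≤ κ ^ n * (1 / c₁) * (c₂ * euclNorm (A'.mulVec c)) := by
          apply mul_le_mul_of_nonneg_left h3; positivity
      _ = (κ ^ n * c₂ / c₁) * euclNorm (A'.mulVec c) := by ring

/-- **`‖A·B‖_op` depends only on the tensor `∑ fᵢ ⊗ gᵢ`, up to constants**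
(Proposition 3.3): if `∑ fᵢ ⊗ gᵢ = ∑ zᵢ ⊗ wᵢ` and `A, A′` (resp. `B, B′`) are reducing
matrices for `f, z` (resp. `g, w`), then `‖A·B‖_op ≲ ‖A′·B′‖_op`. -/
theorem stmt11 (n : ℕ) (hn : 1 ≤ n) (c₁ c₂ κX κY : ℝ) (hc₁ : 0 < c₁) (hc₁₂ : c₁ ≤ c₂)
    (hκX : 1 ≤ κX) (hκY : 1 ≤ κY) :
    ∃ C : ℝ, 0 < C ∧
      ∀ (X : Type u) (Y : Type v) [AddCommGroup X] [Module ℝ X] [AddCommGroup Y] [Module ℝ Y]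
        (Nx : X → ℝ) (Ny : Y → ℝ), IsQuasiNorm Nx κX → IsQuasiNorm Ny κY →
        ∀ (f z : Fin n → X) (g w : Fin n → Y),
          (∑ i, f i ⊗ₜ[ℝ] g i) = (∑ i, z i ⊗ₜ[ℝ] w i) →
          ∀ (A A' B B' : Matrix (Fin n) (Fin n) ℝ),
            IsReducing Nx f c₁ c₂ A → IsReducing Nx z c₁ c₂ A' →
            IsReducing Ny g c₁ c₂ B → IsReducing Ny w c₁ c₂ B' →
            opNorm (A * B) ≤ C * opNorm (A' * B') := by
  have hc₂ : 0 < c₂ := lt_of_lt_of_le hc₁ hc₁₂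
  have hκX0 : 0 < κX := lt_of_lt_of_le zero_lt_one hκX
  have hκY0 : 0 < κY := lt_of_lt_of_le zero_lt_one hκY
  set L₁ := κX ^ n * c₂ / c₁ with hL₁def
  set L₂ := κY ^ n * c₂ / c₁ with hL₂def
  have hL₁ : 0 ≤ L₁ := by positivity
  have hL₂ : 0 ≤ L₂ := by positivity
  refine ⟨L₁ * L₂, by positivity, ?_⟩
  intro X Y _ _ _ _ Nx Ny hNx hNy f z g w ht A A' B B' hA hA' hB hB'
  have hopnn : 0 ≤ opNorm (A' * B') := norm_nonneg _
  apply opNorm_le_of_dot _ _ (by positivity)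
  intro d e hd he
  obtain ⟨φ, hφf, hφz⟩ := side_lemma hκX hNx hc₁ hA hA' d hd
  obtain ⟨ψ, hψg, hψw⟩ := side_lemma hκY hNy hc₁ hB hB' e he
  have hpair := tensor_pairing ht φ ψ
  have hAt : A.transpose = A := transpose_of_posSemidef hA.1
  have hA't : A'.transpose = A' := transpose_of_posSemidef hA'.1
  set p : Fin n → ℝ := fun i => φ (z i) with hp
  set q : Fin n → ℝ := fun i => ψ (w i) with hq
  have hlhs : dotProduct d ((A * B).mulVec e) = dotProduct p q := by
    rw [← Matrix.mulVec_mulVec, symm_dot hAt]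
    calc dotProduct (A.mulVec d) (B.mulVec e)
        = ∑ i, φ (f i) * ψ (g i) := by
          rw [dotProduct]
          exact Finset.sum_congr rfl fun i _ => by rw [hφf i, hψg i]
      _ = ∑ i, φ (z i) * ψ (w i) := hpair
      _ = dotProduct p q := rfl
  rw [hlhs]
  obtain ⟨uu, huu, huA⟩ := factor_through hA'.1.1 hL₁ (fun c => by
    have := hφz c
    simpa [dotProduct] using this)
  obtain ⟨vv, hvv, hvB⟩ := factor_through hB'.1.1 hL₂ (fun c => by
    have := hψw c
    simpa [dotProduct] using this)
  have hkey : dotProduct p q = dotProduct uu ((A' * B').mulVec vv) := by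
    rw [hp, hq, ← huA, ← hvB, ← Matrix.mulVec_mulVec, symm_dot hA't]
  rw [hkey]
  have h1 := dotProduct_le_euclNorm uu ((A' * B').mulVec vv)
  have h2 := euclNorm_mulVec_le (A' * B') vv
  have h3 : euclNorm uu * euclNorm ((A' * B').mulVec vv) ≤ L₁ * (opNorm (A' * B') * L₂) := by
    have h4 : euclNorm ((A' * B').mulVec vv) ≤ opNorm (A' * B') * L₂ := by
      calc euclNorm ((A' * B').mulVec vv) ≤ opNorm (A' * B') * euclNorm vv := h2
        _ ≤ opNorm (A' * B') * L₂ := mul_le_mul_of_nonneg_left hvv hopnn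
    have h5 : 0 ≤ euclNorm ((A' * B').mulVec vv) := euclNorm_nonneg _
    nlinarith [euclNorm_nonneg uu]
  calc dotProduct uu ((A' * B').mulVec vv)
      ≤ |dotProduct uu ((A' * B').mulVec vv)| := le_abs_self _
    _ ≤ euclNorm uu * euclNorm ((A' * B').mulVec vv) := h1
    _ ≤ L₁ * (opNorm (A' * B') * L₂) := h3
    _ = L₁ * L₂ * opNorm (A' * B') := by ring
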